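/- For target observables A on X and B on Y, the entropic incompatibility degree c_inc(A,B) = inf_M sup_ρ [S(A^ρ‖M₁^ρ) + S(B^ρ‖M₂^ρ)] satisfies c_inc(A,B) ≤ log|X| − inf_ρ H(A^ρ), where H is the Shannon entropy. -/

import Mathlib

open scoped BigOperators Classical ComplexOrder

/-- Relative entropy (base 2) of discrete densities, `⊤` if `supp p ⊄ supp q`. -/
noncomputable def relEnt {X : Type*} [Fintype X] (p q : X → ℝ) : EReal :=
  if ∀ x, 0 < p x → 0 < q x then
    ((∑ x, if 0 < p x then p x * Real.logb 2 (p x / q x) else 0 : ℝ) : EReal)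
  else ⊤

/-- A density operator (state) on `ℂⁿ`. -/
def IsState {n : ℕ} (ρ : Matrix (Fin n) (Fin n) ℂ) : Prop :=
  ρ.PosSemidef ∧ ρ.trace = 1

/-- A discrete observable (POVM) with outcomes in the finite set `X`. -/
def IsPOVM {n : ℕ} {X : Type*} [Fintype X] (A : X → Matrix (Fin n) (Fin n) ℂ) : Prop :=
  (∀ x, (A x).PosSemidef) ∧ ∑ x, A x = 1

/-- Outcome probability density of the observable `A` in the state `ρ`. -/
noncomputable def probOf {n : ℕ} {X : Type*} [Fintype X]
    (A : X → Matrix (Fin n) (Fin n) ℂ) (ρ : Matrix (Fin n) (Fin n) ℂ) :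
    X → ℝ := fun x => ((ρ * A x).trace).re


/-- Shannon entropy (base 2) of a discrete density. -/
noncomputable def shannon {X : Type*} [Fintype X] (p : X → ℝ) : ℝ :=
  -∑ x, p x * Real.logb 2 (p x)
/-! The joint observable `M x y = |X|⁻¹ • B y` measures `B` exactly and, ignoring the state,
draws the first outcome uniformly. Its error for `B` vanishes, and its error for `A` in a state `ρ`
is the relative entropy of `A^ρ` to the uniform density, `log |X| - H(A^ρ)`. -/

open Matrix

open scoped MatrixOrder in
theorem Matrix.PosSemidef.trace_mul_nonneg {n 𝕜 : Type*} [Fintype n] [RCLike 𝕜]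
    {A B : Matrix n n 𝕜} (hA : A.PosSemidef) (hB : B.PosSemidef) : 0 ≤ (A * B).trace := by
  classical
  obtain ⟨C, rfl⟩ := CStarAlgebra.nonneg_iff_eq_star_mul_self.mp hA.nonneg
  rw [star_eq_conjTranspose, Matrix.mul_assoc, trace_mul_comm]
  exact (hB.mul_mul_conjTranspose_same C).trace_nonneg

section Observables

variable {n : ℕ} {X Y : Type*} [Fintype X]

theorem probOf_nonneg {A : X → Matrix (Fin n) (Fin n) ℂ} {ρ : Matrix (Fin n) (Fin n) ℂ}
    (hA : IsPOVM A) (hρ : IsState ρ) (x : X) : 0 ≤ probOf A ρ x :=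
  (Complex.nonneg_iff.mp (hρ.1.trace_mul_nonneg (hA.1 x))).1

theorem sum_probOf {A : X → Matrix (Fin n) (Fin n) ℂ} {ρ : Matrix (Fin n) (Fin n) ℂ}
    (hA : IsPOVM A) (hρ : IsState ρ) : ∑ x, probOf A ρ x = 1 := by
  simp only [probOf, ← Complex.re_sum, ← trace_sum, ← Finset.mul_sum, hA.2, Matrix.mul_one,
    hρ.2, Complex.one_re]

noncomputable def trivialJoint (X : Type*) [Fintype X] (B : Y → Matrix (Fin n) (Fin n) ℂ) :
    X → Y → Matrix (Fin n) (Fin n) ℂ :=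
  fun _ y => (Fintype.card X : ℝ)⁻¹ • B y

theorem marginal_snd_trivialJoint [Nonempty X] (B : Y → Matrix (Fin n) (Fin n) ℂ) (y : Y) :
    ∑ x, trivialJoint X B x y = B y := by
  simp [trivialJoint, ← Nat.cast_smul_eq_nsmul ℝ, smul_smul]

variable [Fintype Y]

theorem marginal_fst_trivialJoint {B : Y → Matrix (Fin n) (Fin n) ℂ} (hB : IsPOVM B) (x : X) :
    ∑ y, trivialJoint X B x y = (Fintype.card X : ℝ)⁻¹ • (1 : Matrix (Fin n) (Fin n) ℂ) := by
  simp only [trivialJoint, ← Finset.smul_sum, hB.2]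

theorem isPOVM_trivialJoint [Nonempty X] {B : Y → Matrix (Fin n) (Fin n) ℂ} (hB : IsPOVM B) :
    IsPOVM (fun xy : X × Y => trivialJoint X B xy.1 xy.2) := by
  refine ⟨fun xy => (hB.1 xy.2).smul (by positivity), ?_⟩
  simp [Fintype.sum_prod_type, marginal_fst_trivialJoint hB, ← Nat.cast_smul_eq_nsmul ℝ, smul_smul]

theorem probOf_marginal_fst_trivialJoint {B : Y → Matrix (Fin n) (Fin n) ℂ} (hB : IsPOVM B)
    {ρ : Matrix (Fin n) (Fin n) ℂ} (hρ : IsState ρ) :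
    probOf (fun x => ∑ y, trivialJoint X B x y) ρ = fun _ => (Fintype.card X : ℝ)⁻¹ := by
  ext x
  simp [probOf, marginal_fst_trivialJoint hB, hρ.2]

end Observables

section Entropy

variable {X : Type*} [Fintype X]

theorem relEnt_self (p : X → ℝ) : relEnt p p = 0 := by
  rw [relEnt, if_pos fun _ h => h]
  refine congrArg _ (Finset.sum_eq_zero fun x _ => ?_)
  split_ifs with h
  · rw [div_self h.ne', Real.logb_one, mul_zero]
  · rfl

theorem relEnt_const_inv_card [Nonempty X] {p : X → ℝ} (hp : ∀ x, 0 ≤ p x) (hs : ∑ x, p x = 1) :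
    relEnt p (fun _ => (Fintype.card X : ℝ)⁻¹) =
      ((Real.logb 2 (Fintype.card X) - shannon p : ℝ) : EReal) := by
  have hc : (0 : ℝ) < Fintype.card X := Nat.cast_pos.mpr Fintype.card_pos
  rw [relEnt, if_pos fun _ _ => inv_pos.mpr hc]
  congr 1
  have summand : ∀ x, (if 0 < p x then p x * Real.logb 2 (p x / (Fintype.card X : ℝ)⁻¹) else 0) =
      p x * Real.logb 2 (p x) + p x * Real.logb 2 (Fintype.card X) := by
    intro x
    split_ifs with h
    · rw [div_inv_eq_mul, Real.logb_mul h.ne' hc.ne', mul_add]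
    · simp [le_antisymm (not_lt.mp h) (hp x)]
  rw [Finset.sum_congr rfl fun x _ => summand x, Finset.sum_add_distrib, ← Finset.sum_mul, hs,
    shannon]
  ring

theorem shannon_nonneg {p : X → ℝ} (hp : ∀ x, 0 ≤ p x) (hs : ∑ x, p x = 1) : 0 ≤ shannon p := by
  refine neg_nonneg.mpr (Finset.sum_nonpos fun x _ => ?_)
  have hle : p x ≤ 1 := hs ▸ Finset.single_le_sum (fun i _ => hp i) (Finset.mem_univ x)
  exact mul_nonpos_of_nonneg_of_nonpos (hp x) (Real.logb_nonpos one_lt_two (hp x) hle)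

end Entropy

theorem stmt9_general {n : ℕ} {X Y : Type*} [Fintype X] [Fintype Y]
    [Nonempty X]
    (A : X → Matrix (Fin n) (Fin n) ℂ) (B : Y → Matrix (Fin n) (Fin n) ℂ)
    (hA : IsPOVM A) (hB : IsPOVM B) :
    (⨅ M : {M : X → Y → Matrix (Fin n) (Fin n) ℂ //
        IsPOVM (fun xy : X × Y => M xy.1 xy.2)},
      ⨆ ρ : {ρ : Matrix (Fin n) (Fin n) ℂ // IsState ρ},
        relEnt (probOf A ρ.1) (probOf (fun x => ∑ y, M.1 x y) ρ.1) +
          relEnt (probOf B ρ.1) (probOf (fun y => ∑ x, M.1 x y) ρ.1)) ≤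
      ((Real.logb 2 (Fintype.card X) -
        ⨅ ρ : {ρ : Matrix (Fin n) (Fin n) ℂ // IsState ρ},
          shannon (probOf A ρ.1) : ℝ) : EReal) := by
  have hbdd : BddBelow (Set.range fun ρ : {ρ : Matrix (Fin n) (Fin n) ℂ // IsState ρ} =>
      shannon (probOf A ρ.1)) :=
    ⟨0, Set.forall_mem_range.2 fun ρ => shannon_nonneg (probOf_nonneg hA ρ.2) (sum_probOf hA ρ.2)⟩
  refine (iInf_le _ ⟨trivialJoint X B, isPOVM_trivialJoint hB⟩).trans (iSup_le fun ρ => ?_)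
  simp only [probOf_marginal_fst_trivialJoint hB ρ.2, marginal_snd_trivialJoint, relEnt_self,
    add_zero, relEnt_const_inv_card (probOf_nonneg hA ρ.2) (sum_probOf hA ρ.2),
    EReal.coe_le_coe_iff]
  exact sub_le_sub_left (ciInf_le hbdd ρ) _

/-- The entropic incompatibility degree
`c_inc(A,B) = inf_M sup_ρ [S(A^ρ‖M₁^ρ) + S(B^ρ‖M₂^ρ)]` satisfies
`c_inc(A,B) ≤ log|X| − inf_ρ H(A^ρ)`. -/
theorem stmt9 {n : ℕ} [NeZero n] {X Y : Type*} [Fintype X] [Fintype Y]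
    [Nonempty X] [Nonempty Y]
    (A : X → Matrix (Fin n) (Fin n) ℂ) (B : Y → Matrix (Fin n) (Fin n) ℂ)
    (hA : IsPOVM A) (hB : IsPOVM B) :
    (⨅ M : {M : X → Y → Matrix (Fin n) (Fin n) ℂ //
        IsPOVM (fun xy : X × Y => M xy.1 xy.2)},
      ⨆ ρ : {ρ : Matrix (Fin n) (Fin n) ℂ // IsState ρ},
        relEnt (probOf A ρ.1) (probOf (fun x => ∑ y, M.1 x y) ρ.1) +
          relEnt (probOf B ρ.1) (probOf (fun y => ∑ x, M.1 x y) ρ.1)) ≤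
      ((Real.logb 2 (Fintype.card X) -
        ⨅ ρ : {ρ : Matrix (Fin n) (Fin n) ℂ // IsState ρ},
          shannon (probOf A ρ.1) : ℝ) : EReal) :=
  stmt9_general A B hA hB
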